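/- arXiv:2303.04435 — 2 statements merged into one kernel-verified Lean document; each statement's English description precedes it below -/
import Mathlib

section
/- Let Ā be an N×N real symmetric matrix, let e₁ ∈ ℝ^N be a unit vector with Āe₁ = e₁, and suppose that for every v ⊥ e₁ one has −‖v‖² ≤ ⟨Āv, v⟩ ≤ (1−λ_G)‖v‖² with λ_G ∈ [0,2]. Let 0 ≤ α ≤ 1/4, Q = (1−2α)I + 2αĀ, and M = {e₁yᵀ : y ∈ ℝ^m}. Then for every F⁽⁰⁾ ∈ ℝ^{N×m} and every t ∈ ℕ, the iterates F⁽ᵗ⁾ = QᵗF⁽⁰⁾ satisfy d_M(F⁽ᵗ⁾) ≤ |1 − 2αλ_G|ᵗ · d_M(F⁽⁰⁾); in particular, if λ_G > 0 and 0 < α ≤ 1/4, then d_M(F⁽ᵗ⁾) → 0 as t → ∞ (the alignment update drives intra-class features toward the rank-one subspace M). -/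
open scoped RealInnerProductSpace
open Finset Matrix Filter

/-- A feature matrix `F ∈ ℝ^{N×m}` viewed as a point of the Euclidean (Frobenius)
norm space `ℝ^{N×m}`. -/
abbrev FeatureSpace (N m : ℕ) := EuclideanSpace ℝ (Fin N × Fin m)

/-- Left multiplication of a feature matrix by an `N×N` matrix, i.e. `F ↦ QF`. -/
noncomputable def matAct {N m : ℕ} (Q : Matrix (Fin N) (Fin N) ℝ)
    (F : FeatureSpace N m) : FeatureSpace N m :=
  WithLp.toLp 2 (fun p : Fin N × Fin m => ∑ j, Q p.1 j * F (j, p.2))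

/-- Multiplication of a vector by an `N×N` matrix, i.e. `v ↦ Qv`. -/
noncomputable def matVec {N : ℕ} (Q : Matrix (Fin N) (Fin N) ℝ)
    (v : EuclideanSpace ℝ (Fin N)) : EuclideanSpace ℝ (Fin N) :=
  WithLp.toLp 2 (fun i => ∑ j, Q i j * v j)

section Aux

variable {N m : ℕ}

lemma matVec_add (Q : Matrix (Fin N) (Fin N) ℝ) (v w : EuclideanSpace ℝ (Fin N)) :
    matVec Q (v + w) = matVec Q v + matVec Q w := by
  ext i; simp [matVec, mul_add, Finset.sum_add_distrib]

lemma matVec_sub (Q : Matrix (Fin N) (Fin N) ℝ) (v w : EuclideanSpace ℝ (Fin N)) :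
    matVec Q (v - w) = matVec Q v - matVec Q w := by
  ext i; simp [matVec, mul_sub, Finset.sum_sub_distrib]

lemma matVec_zero (Q : Matrix (Fin N) (Fin N) ℝ) :
    matVec Q (0 : EuclideanSpace ℝ (Fin N)) = 0 := by
  ext i; simp [matVec]

lemma inner_matVec (Q : Matrix (Fin N) (Fin N) ℝ) (hQ : Q.IsSymm)
    (v w : EuclideanSpace ℝ (Fin N)) :
    ⟪matVec Q v, w⟫ = ⟪v, matVec Q w⟫ := by
  simp only [PiLp.inner_apply, RCLike.inner_apply, conj_trivial, matVec,
    Finset.sum_mul, Finset.mul_sum]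
  rw [Finset.sum_comm]
  refine Finset.sum_congr rfl fun i _ => Finset.sum_congr rfl fun j _ => ?_
  rw [hQ.apply i j]
  ring

/-- Polarization: a symmetric operator whose quadratic form is bounded by `c`
on the invariant subspace `{v | ⟪v,e₁⟫ = 0}` has operator norm `≤ c` there. -/
lemma opNorm_of_form (Q : Matrix (Fin N) (Fin N) ℝ) (hQ : Q.IsSymm)
    (e₁ : EuclideanSpace ℝ (Fin N)) (heig : matVec Q e₁ = e₁) (c : ℝ) (hc : 0 ≤ c)
    (hform : ∀ v : EuclideanSpace ℝ (Fin N), ⟪v, e₁⟫ = 0 → |⟪matVec Q v, v⟫| ≤ c * ‖v‖ ^ 2)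
    (v : EuclideanSpace ℝ (Fin N)) (hv : ⟪v, e₁⟫ = 0) :
    ‖matVec Q v‖ ≤ c * ‖v‖ := by
  have hSperp : ∀ u : EuclideanSpace ℝ (Fin N), ⟪u, e₁⟫ = 0 → ⟪matVec Q u, e₁⟫ = 0 := by
    intro u hu
    rw [inner_matVec Q hQ, heig]
    exact hu
  by_cases hv0 : v = 0
  · rw [hv0, matVec_zero]
    simp
  by_cases hSv0 : matVec Q v = 0
  · rw [hSv0]
    simp only [norm_zero]
    positivity
  set w : EuclideanSpace ℝ (Fin N) := (‖v‖ / ‖matVec Q v‖) • matVec Q v with hw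
  have hwperp : ⟪w, e₁⟫ = 0 := by
    rw [hw, real_inner_smul_left, hSperp v hv, mul_zero]
  have hnw : ‖w‖ = ‖v‖ := by
    rw [hw, norm_smul, Real.norm_eq_abs, abs_of_nonneg (by positivity)]
    have h0 : ‖matVec Q v‖ ≠ 0 := norm_ne_zero_iff.mpr hSv0
    field_simp
  have hsymm : ⟪v, matVec Q w⟫ = ⟪matVec Q v, w⟫ := by
    rw [← inner_matVec Q hQ]
  have hpol : ⟪matVec Q (v + w), v + w⟫ - ⟪matVec Q (v - w), v - w⟫ = 4 * ⟪matVec Q v, w⟫ := by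
    rw [matVec_add, matVec_sub, inner_add_left, inner_add_right, inner_add_right,
      inner_sub_left, inner_sub_right, inner_sub_right]
    have h2 : ⟪matVec Q w, v⟫ = ⟪matVec Q v, w⟫ := by
      rw [real_inner_comm, hsymm]
    linarith [h2]
  have hb1 : |⟪matVec Q (v + w), v + w⟫| ≤ c * ‖v + w‖ ^ 2 :=
    hform _ (by rw [inner_add_left, hv, hwperp, add_zero])
  have hb2 : |⟪matVec Q (v - w), v - w⟫| ≤ c * ‖v - w‖ ^ 2 :=
    hform _ (by rw [inner_sub_left, hv, hwperp, sub_zero])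
  have hpar : ‖v + w‖ ^ 2 + ‖v - w‖ ^ 2 = 2 * (‖v‖ ^ 2 + ‖w‖ ^ 2) := by
    rw [@norm_add_sq_real, @norm_sub_sq_real]
    ring
  have hlhs : ⟪matVec Q v, w⟫ = ‖v‖ * ‖matVec Q v‖ := by
    rw [hw, real_inner_smul_right, real_inner_self_eq_norm_sq]
    have h0 : ‖matVec Q v‖ ≠ 0 := norm_ne_zero_iff.mpr hSv0
    field_simp
  have hkey : 4 * (‖v‖ * ‖matVec Q v‖) ≤ 4 * (c * ‖v‖ ^ 2) := by
    have := abs_le.mp hb1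
    have := abs_le.mp hb2
    rw [hnw] at hpar
    nlinarith [hpol, hlhs]
  have hvpos : 0 < ‖v‖ := norm_pos_iff.mpr hv0
  nlinarith [hkey, hvpos]

/-- Orthogonal projection of a feature matrix onto the rank-one subspace `M`. -/
noncomputable def projM (e₁ : EuclideanSpace ℝ (Fin N)) (F : FeatureSpace N m) :
    FeatureSpace N m :=
  WithLp.toLp 2 (fun p : Fin N × Fin m => e₁ p.1 * (∑ i, e₁ i * F (i, p.2)))

/-- The `k`-th column of a feature matrix. -/
def colF (G : FeatureSpace N m) (k : Fin m) : EuclideanSpace ℝ (Fin N) :=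
  WithLp.toLp 2 (fun i => G (i, k))

lemma norm_sq_eq_sum_cols (G : FeatureSpace N m) :
    ‖G‖ ^ 2 = ∑ k, ‖colF G k‖ ^ 2 := by
  have h1 : ‖G‖ ^ 2 = ∑ p : Fin N × Fin m, G p * G p := by
    rw [← real_inner_self_eq_norm_sq]
    simp only [PiLp.inner_apply, RCLike.inner_apply, conj_trivial]
  have h2 : ∀ k, ‖colF G k‖ ^ 2 = ∑ i, G (i, k) * G (i, k) := by
    intro k
    rw [← real_inner_self_eq_norm_sq]
    simp only [PiLp.inner_apply, RCLike.inner_apply, conj_trivial, colF, PiLp.toLp_apply]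
  rw [h1]
  simp_rw [h2]
  rw [Fintype.sum_prod_type, Finset.sum_comm]

lemma matAct_col (Q : Matrix (Fin N) (Fin N) ℝ) (G : FeatureSpace N m) (k : Fin m) :
    colF (matAct Q G) k = matVec Q (colF G k) := by
  ext i; rfl

lemma matAct_sub (Q : Matrix (Fin N) (Fin N) ℝ) (X Y : FeatureSpace N m) :
    matAct Q (X - Y) = matAct Q X - matAct Q Y := by
  ext p; simp [matAct, mul_sub, Finset.sum_sub_distrib]

lemma col_residual_perp (e₁ : EuclideanSpace ℝ (Fin N)) (he₁ : ‖e₁‖ = 1)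
    (X : FeatureSpace N m) (k : Fin m) :
    ⟪colF (X - projM e₁ X) k, e₁⟫ = 0 := by
  have hone : ∑ i, e₁ i * e₁ i = 1 := by
    have := real_inner_self_eq_norm_sq e₁
    rw [he₁] at this
    simp only [PiLp.inner_apply, RCLike.inner_apply, conj_trivial, one_pow] at this
    exact this
  simp only [PiLp.inner_apply, RCLike.inner_apply, conj_trivial, colF, PiLp.toLp_apply,
    PiLp.sub_apply, projM, mul_sub, Finset.sum_sub_distrib]
  have : ∑ i, e₁ i * (e₁ i * ∑ j, e₁ j * X (j, k))
      = (∑ j, e₁ j * X (j, k)) * ∑ i, e₁ i * e₁ i := by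
    rw [Finset.mul_sum]
    exact Finset.sum_congr rfl fun i _ => by ring
  rw [this, hone, mul_one, sub_eq_zero]

lemma inner_residual_rankone (e₁ : EuclideanSpace ℝ (Fin N)) (he₁ : ‖e₁‖ = 1)
    (X : FeatureSpace N m) (H : FeatureSpace N m) (z : Fin m → ℝ)
    (hH : ∀ p, H p = e₁ p.1 * z p.2) :
    ⟪X - projM e₁ X, H⟫ = 0 := by
  simp only [PiLp.inner_apply, RCLike.inner_apply, conj_trivial]
  rw [Fintype.sum_prod_type, Finset.sum_comm]
  rw [Finset.sum_eq_zero]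
  intro k _
  have hperp := col_residual_perp e₁ he₁ X k
  simp only [PiLp.inner_apply, RCLike.inner_apply, conj_trivial, colF, PiLp.toLp_apply] at hperp
  have : ∑ i, H (i, k) * (X - projM e₁ X) (i, k)
      = (∑ i, e₁ i * (X - projM e₁ X) (i, k)) * z k := by
    rw [Finset.sum_mul]
    exact Finset.sum_congr rfl fun i _ => by rw [hH (i, k)]; ring
  rw [this, hperp, zero_mul]

lemma infDist_eq_residual (e₁ : EuclideanSpace ℝ (Fin N)) (he₁ : ‖e₁‖ = 1)
    (M : Set (FeatureSpace N m))
    (hM : M = {G : FeatureSpace N m | ∃ y : Fin m → ℝ, ∀ p, G p = e₁ p.1 * y p.2})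
    (X : FeatureSpace N m) :
    Metric.infDist X M = ‖X - projM e₁ X‖ := by
  have hPmem : projM e₁ X ∈ M := by
    rw [hM]
    exact ⟨fun k => ∑ i, e₁ i * X (i, k), fun p => rfl⟩
  have hne : M.Nonempty := ⟨_, hPmem⟩
  refine le_antisymm ?_ ?_
  · calc Metric.infDist X M ≤ dist X (projM e₁ X) := Metric.infDist_le_dist_of_mem hPmem
    _ = ‖X - projM e₁ X‖ := dist_eq_norm _ _
  · rw [← not_lt]
    intro hlt
    obtain ⟨G, hG, hd⟩ := (Metric.infDist_lt_iff hne).mp hlt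
    rw [hM] at hG
    obtain ⟨y, hy⟩ := hG
    rw [dist_eq_norm] at hd
    refine absurd hd (not_lt.mpr ?_)
    have hdecomp : X - G = (X - projM e₁ X) + (projM e₁ X - G) := by abel
    have hinner : ⟪X - projM e₁ X, projM e₁ X - G⟫ = 0 := by
      refine inner_residual_rankone e₁ he₁ X _ (fun k => (∑ i, e₁ i * X (i, k)) - y k) ?_
      intro p
      simp only [PiLp.sub_apply, projM, PiLp.toLp_apply, hy p]
      ring
    have hpyth : ‖X - G‖ ^ 2 = ‖X - projM e₁ X‖ ^ 2 + ‖projM e₁ X - G‖ ^ 2 := by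
      rw [hdecomp, @norm_add_sq_real, hinner]
      ring
    nlinarith [norm_nonneg (X - G), norm_nonneg (X - projM e₁ X),
      norm_nonneg (projM e₁ X - G), hpyth]

end Aux

/-- **Repeated alignment updates drive intra-class features toward the rank-one
subspace `M`.** The iterates `F⁽ᵗ⁾ = QᵗF⁽⁰⁾` satisfy
`d_M(F⁽ᵗ⁾) ≤ |1 − 2αλ_G|ᵗ·d_M(F⁽⁰⁾)`; if moreover `λ_G > 0` and `0 < α ≤ 1/4`
then `d_M(F⁽ᵗ⁾) → 0`. -/
theorem alignment_iterates_converge_to_rank_one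
    (N m : ℕ)
    (Abar : Matrix (Fin N) (Fin N) ℝ) (hsym : Abar.IsSymm)
    (e₁ : EuclideanSpace ℝ (Fin N)) (he₁ : ‖e₁‖ = 1)
    (heig : matVec Abar e₁ = e₁)
    (lamG : ℝ) (hlam : lamG ∈ Set.Icc (0 : ℝ) 2)
    (hquad : ∀ v : EuclideanSpace ℝ (Fin N), ⟪v, e₁⟫ = 0 →
      -‖v‖ ^ 2 ≤ ⟪matVec Abar v, v⟫ ∧ ⟪matVec Abar v, v⟫ ≤ (1 - lamG) * ‖v‖ ^ 2)
    (α : ℝ) (hα₀ : 0 ≤ α) (hα₁ : α ≤ 1 / 4)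
    (Q : Matrix (Fin N) (Fin N) ℝ)
    (hQ : Q = (1 - 2 * α) • (1 : Matrix (Fin N) (Fin N) ℝ) + (2 * α) • Abar)
    (M : Set (FeatureSpace N m))
    (hM : M = {G : FeatureSpace N m | ∃ y : Fin m → ℝ, ∀ p, G p = e₁ p.1 * y p.2})
    (F : ℕ → FeatureSpace N m)
    (hrec : ∀ t, F (t + 1) = matAct Q (F t)) :
    (∀ t : ℕ, Metric.infDist (F t) M ≤ |1 - 2 * α * lamG| ^ t * Metric.infDist (F 0) M)
    ∧ (0 < lamG → 0 < α →
        Tendsto (fun t : ℕ => Metric.infDist (F t) M) atTop (nhds 0)) := by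
  obtain ⟨hlam0, hlam2⟩ := hlam
  -- the contraction constant
  set c : ℝ := 1 - 2 * α * lamG with hc
  have hc0 : 0 ≤ c := by nlinarith
  have habs : |1 - 2 * α * lamG| = c := abs_of_nonneg hc0
  -- Q is symmetric
  have hQsym : Q.IsSymm := by
    rw [hQ]
    unfold Matrix.IsSymm
    rw [Matrix.transpose_add, Matrix.transpose_smul, Matrix.transpose_smul,
      Matrix.transpose_one, hsym.eq]
  -- matVec for Q in terms of Abar
  have hQvec : ∀ v : EuclideanSpace ℝ (Fin N),
      matVec Q v = (1 - 2 * α) • v + (2 * α) • matVec Abar v := by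
    intro v
    ext i
    rw [hQ]
    simp only [matVec, PiLp.toLp_apply, Matrix.add_apply, Matrix.smul_apply, PiLp.add_apply, PiLp.smul_apply,
      smul_eq_mul, Matrix.one_apply, add_mul, Finset.sum_add_distrib, Finset.mul_sum]
    congr 1
    · rw [Finset.sum_congr rfl (fun j _ => by
        rw [show ((1 - 2 * α) * if i = j then (1:ℝ) else 0) * v j
          = (if i = j then (1 - 2 * α) * v j else 0) from by split <;> simp [*]])]
      simp
    · exact Finset.sum_congr rfl fun j _ => by ring
  -- Q fixes e₁
  have hQe : matVec Q e₁ = e₁ := by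
    rw [hQvec, heig]
    ext i
    simp only [PiLp.add_apply, PiLp.smul_apply, smul_eq_mul]
    ring
  -- form bound for Q on e₁^⊥
  have hform : ∀ v : EuclideanSpace ℝ (Fin N), ⟪v, e₁⟫ = 0 →
      |⟪matVec Q v, v⟫| ≤ c * ‖v‖ ^ 2 := by
    intro v hv
    obtain ⟨hlow, hhigh⟩ := hquad v hv
    have hQform : ⟪matVec Q v, v⟫ = (1 - 2 * α) * ‖v‖ ^ 2 + (2 * α) * ⟪matVec Abar v, v⟫ := by
      rw [hQvec, inner_add_left, real_inner_smul_left, real_inner_smul_left,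
        real_inner_self_eq_norm_sq]
    rw [abs_le]
    constructor <;> nlinarith [sq_nonneg ‖v‖]
  -- Q preserves orthogonality to e₁
  have hQperp : ∀ u : EuclideanSpace ℝ (Fin N), ⟪u, e₁⟫ = 0 → ⟪matVec Q u, e₁⟫ = 0 := by
    intro u hu
    rw [inner_matVec Q hQsym, hQe]
    exact hu
  -- contraction on feature matrices with perpendicular columns
  have hcontract : ∀ G : FeatureSpace N m, (∀ k, ⟪colF G k, e₁⟫ = 0) →
      ‖matAct Q G‖ ≤ c * ‖G‖ := by
    intro G hcols
    have hsq : ‖matAct Q G‖ ^ 2 ≤ (c * ‖G‖) ^ 2 := by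
      rw [norm_sq_eq_sum_cols]
      calc ∑ k, ‖colF (matAct Q G) k‖ ^ 2
          ≤ ∑ k, (c * ‖colF G k‖) ^ 2 := by
            refine Finset.sum_le_sum fun k _ => ?_
            have hb := opNorm_of_form Q hQsym e₁ hQe c hc0 hform (colF G k) (hcols k)
            rw [matAct_col]
            have h1 : (0:ℝ) ≤ ‖matVec Q (colF G k)‖ := norm_nonneg _
            nlinarith
        _ = c ^ 2 * ∑ k, ‖colF G k‖ ^ 2 := by
            rw [Finset.mul_sum]
            exact Finset.sum_congr rfl fun k _ => by ring
        _ = (c * ‖G‖) ^ 2 := by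
            rw [← norm_sq_eq_sum_cols]
            ring
    nlinarith [norm_nonneg (matAct Q G), mul_nonneg hc0 (norm_nonneg G), hsq]
  -- the residual recursion
  have hresid : ∀ t, F (t + 1) - projM e₁ (F (t + 1)) = matAct Q (F t - projM e₁ (F t)) := by
    intro t
    have hdot : ∀ Y : EuclideanSpace ℝ (Fin N),
        (∑ i, e₁ i * (∑ j, Q i j * Y j)) = ∑ j, e₁ j * Y j := by
      intro Y
      have h := inner_matVec Q hQsym e₁ Y
      rw [hQe] at h
      simpa [PiLp.inner_apply, RCLike.inner_apply, matVec, mul_comm] using h.symm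
    have hA : projM e₁ (matAct Q (F t)) = projM e₁ (F t) := by
      ext p
      simp only [projM, matAct, PiLp.toLp_apply]
      have hd := hdot (WithLp.toLp 2 (fun j => F t (j, p.2)))
      simp only [PiLp.toLp_apply] at hd
      rw [hd]
    have hB : matAct Q (projM e₁ (F t)) = projM e₁ (F t) := by
      ext p
      have he := congrArg (fun v : EuclideanSpace ℝ (Fin N) => v p.1) hQe
      simp only [matVec, PiLp.toLp_apply] at he
      simp only [matAct, projM, PiLp.toLp_apply]
      rw [show (∑ j, Q p.1 j * (e₁ j * ∑ i, e₁ i * F t (i, p.2)))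
          = (∑ j, Q p.1 j * e₁ j) * ∑ i, e₁ i * F t (i, p.2) from by
        rw [Finset.sum_mul]; exact Finset.sum_congr rfl fun j _ => by ring, he]
    rw [hrec t, hA]
    calc matAct Q (F t) - projM e₁ (F t)
        = matAct Q (F t) - matAct Q (projM e₁ (F t)) := by rw [hB]
      _ = matAct Q (F t - projM e₁ (F t)) := (matAct_sub Q _ _).symm
  -- main inductive bound
  have hstep : ∀ t, ‖F (t + 1) - projM e₁ (F (t + 1))‖ ≤ c * ‖F t - projM e₁ (F t)‖ := by
    intro t
    rw [hresid t]
    exact hcontract _ (fun k => col_residual_perp e₁ he₁ (F t) k)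
  have hbound : ∀ t, ‖F t - projM e₁ (F t)‖ ≤ c ^ t * ‖F 0 - projM e₁ (F 0)‖ := by
    intro t
    induction t with
    | zero => simp
    | succ t ih =>
      calc ‖F (t + 1) - projM e₁ (F (t + 1))‖ ≤ c * ‖F t - projM e₁ (F t)‖ := hstep t
        _ ≤ c * (c ^ t * ‖F 0 - projM e₁ (F 0)‖) := by
            exact mul_le_mul_of_nonneg_left ih hc0
        _ = c ^ (t + 1) * ‖F 0 - projM e₁ (F 0)‖ := by ring
  have hdist : ∀ t, Metric.infDist (F t) M = ‖F t - projM e₁ (F t)‖ :=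
    fun t => infDist_eq_residual e₁ he₁ M hM (F t)
  have hmain : ∀ t : ℕ, Metric.infDist (F t) M ≤ |1 - 2 * α * lamG| ^ t * Metric.infDist (F 0) M := by
    intro t
    rw [hdist t, hdist 0, habs]
    exact hbound t
  refine ⟨hmain, fun hlpos hapos => ?_⟩
  have hclt : c < 1 := by nlinarith
  have htend : Tendsto (fun t : ℕ => |1 - 2 * α * lamG| ^ t * Metric.infDist (F 0) M)
      atTop (nhds 0) := by
    rw [show (0:ℝ) = 0 * Metric.infDist (F 0) M from (zero_mul _).symm]
    refine Tendsto.mul_const _ ?_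
    apply tendsto_pow_atTop_nhds_zero_of_abs_lt_one
    rw [abs_abs, habs]
    exact hclt
  exact squeeze_zero (fun t => Metric.infDist_nonneg) hmain htend
end

section
/- Let Ā be an N×N real symmetric matrix and let e₁, e ∈ ℝ^N be orthogonal unit vectors with Āe₁ = e₁ and Āe = e (eigenvalue 1 has multiplicity at least 2, as happens when the intra-class graph is disconnected). Let α ∈ ℝ, Q = (1−2α)I + 2αĀ, and M = {e₁yᵀ : y ∈ ℝ^m}. Then for every nonzero y ∈ ℝ^m, the feature matrix F = eyᵀ satisfies QF = F and d_M(QF) = d_M(F) = ‖y‖ > 0; in particular, the alignment update never decreases the distance of F to M. -/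
open scoped RealInnerProductSpace
open Finset Matrix

/-- **On a disconnected class the alignment update cannot decrease the distance to
`M`.** If eigenvalue 1 of `Ā` has a second unit eigenvector `e ⊥ e₁`, then for every
nonzero `y`, the feature matrix `F = eyᵀ` satisfies `QF = F` and
`d_M(QF) = d_M(F) = ‖y‖ > 0`. -/
theorem alignment_update_cannot_merge_disconnected_components
    (N m : ℕ)
    (Abar : Matrix (Fin N) (Fin N) ℝ) (hsym : Abar.IsSymm)
    (e₁ e : EuclideanSpace ℝ (Fin N))
    (he₁ : ‖e₁‖ = 1) (he : ‖e‖ = 1) (horth : ⟪e₁, e⟫ = 0)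
    (heig₁ : matVec Abar e₁ = e₁) (heig : matVec Abar e = e)
    (α : ℝ)
    (Q : Matrix (Fin N) (Fin N) ℝ)
    (hQ : Q = (1 - 2 * α) • (1 : Matrix (Fin N) (Fin N) ℝ) + (2 * α) • Abar)
    (M : Set (FeatureSpace N m))
    (hM : M = {G : FeatureSpace N m | ∃ y : Fin m → ℝ, ∀ p, G p = e₁ p.1 * y p.2})
    (y : EuclideanSpace ℝ (Fin m)) (hy : y ≠ 0)
    (F : FeatureSpace N m) (hF : ∀ p, F p = e p.1 * y p.2) :
    matAct Q F = F
    ∧ Metric.infDist (matAct Q F) M = Metric.infDist F M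
    ∧ Metric.infDist F M = ‖y‖
    ∧ 0 < ‖y‖ := by
  -- basic scalar facts
  have hsum_e : ∑ i, e i ^ 2 = 1 := by
    have h := EuclideanSpace.norm_eq e
    rw [he] at h
    have h2 : Real.sqrt (∑ i, ‖e i‖ ^ 2) = 1 := h.symm
    have h3 : (∑ i, ‖e i‖ ^ 2) = 1 := by
      have hnn : (0:ℝ) ≤ ∑ i, ‖e i‖ ^ 2 :=
        Finset.sum_nonneg fun i _ => sq_nonneg _
      nlinarith [Real.sq_sqrt hnn, Real.sqrt_nonneg (∑ i, ‖e i‖ ^ 2)]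
    simpa [Real.norm_eq_abs, sq_abs] using h3
  have hsum_e₁ : ∑ i, e₁ i ^ 2 = 1 := by
    have h := EuclideanSpace.norm_eq e₁
    rw [he₁] at h
    have h3 : (∑ i, ‖e₁ i‖ ^ 2) = 1 := by
      have hnn : (0:ℝ) ≤ ∑ i, ‖e₁ i‖ ^ 2 :=
        Finset.sum_nonneg fun i _ => sq_nonneg _
      nlinarith [Real.sq_sqrt hnn, Real.sqrt_nonneg (∑ i, ‖e₁ i‖ ^ 2)]
    simpa [Real.norm_eq_abs, sq_abs] using h3
  have horth' : ∑ i, e₁ i * e i = 0 := by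
    simpa [PiLp.inner_apply, RCLike.inner_apply, conj_trivial, mul_comm] using horth
  have hnormy : ‖y‖ = Real.sqrt (∑ j, y j ^ 2) := by
    rw [EuclideanSpace.norm_eq]
    simp [Real.norm_eq_abs, sq_abs]
  -- Q e = e
  have hQe : ∀ i, ∑ j, Q i j * e j = e i := by
    intro i
    have hA : ∑ j, Abar i j * e j = e i := congrArg (fun v : EuclideanSpace ℝ (Fin N) => v i) heig
    rw [hQ]
    simp only [Matrix.add_apply, Matrix.smul_apply, Matrix.one_apply, smul_eq_mul]
    rw [Finset.sum_congr rfl (fun j _ => by ring_nf :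
      ∀ j ∈ Finset.univ, ((1 - 2*α) * (if i = j then (1:ℝ) else 0) + 2*α * Abar i j) * e j
        = (1 - 2*α) * ((if i = j then (1:ℝ) else 0) * e j) + 2*α * (Abar i j * e j))]
    rw [Finset.sum_add_distrib, ← Finset.mul_sum, ← Finset.mul_sum]
    simp only [ite_mul, one_mul, zero_mul, Finset.sum_ite_eq, Finset.mem_univ, if_true]
    rw [hA]; ring
  -- QF = F
  have hQF : matAct Q F = F := by
    refine PiLp.ext fun p => ?_
    show (∑ j, Q p.1 j * F (j, p.2)) = F p
    rw [hF p]
    calc ∑ j, Q p.1 j * F (j, p.2) = ∑ j, (Q p.1 j * e j) * y p.2 := by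
          refine Finset.sum_congr rfl fun j _ => ?_
          rw [hF (j, p.2)]; ring
      _ = (∑ j, Q p.1 j * e j) * y p.2 := by rw [Finset.sum_mul]
      _ = e p.1 * y p.2 := by rw [hQe p.1]
  -- key distance computation
  have key : ∀ z : Fin m → ℝ,
      ∑ p : Fin N × Fin m, (e p.1 * y p.2 - e₁ p.1 * z p.2) ^ 2
        = (∑ j, y j ^ 2) + (∑ j, z j ^ 2) := by
    intro z
    rw [Fintype.sum_prod_type]
    have hin : ∀ i : Fin N, ∑ j, (e i * y j - e₁ i * z j) ^ 2
        = e i ^ 2 * (∑ j, y j ^ 2) - (2 * (e i * e₁ i)) * (∑ j, y j * z j)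
          + e₁ i ^ 2 * (∑ j, z j ^ 2) := by
      intro i
      rw [Finset.mul_sum, Finset.mul_sum, Finset.mul_sum]
      rw [← Finset.sum_sub_distrib, ← Finset.sum_add_distrib]
      exact Finset.sum_congr rfl fun j _ => by ring
    rw [Finset.sum_congr rfl (fun i _ => hin i)]
    rw [Finset.sum_add_distrib, Finset.sum_sub_distrib]
    rw [← Finset.sum_mul, ← Finset.sum_mul, ← Finset.sum_mul]
    have h2 : ∑ i, 2 * (e i * e₁ i) = 0 := by
      rw [← Finset.mul_sum]
      rw [Finset.sum_congr rfl (fun i _ => mul_comm (e i) (e₁ i)), horth']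
      ring
    rw [hsum_e, hsum_e₁, h2]
    ring
  -- distance of F to any element of M
  have hdist : ∀ (G : FeatureSpace N m) (z : Fin m → ℝ), (∀ p, G p = e₁ p.1 * z p.2) →
      dist F G = Real.sqrt ((∑ j, y j ^ 2) + (∑ j, z j ^ 2)) := by
    intro G z hz
    rw [EuclideanSpace.dist_eq]
    congr 1
    rw [← key z]
    refine Finset.sum_congr rfl fun p _ => ?_
    rw [hF p, hz p, Real.dist_eq, sq_abs]
  -- 0 ∈ M
  have h0mem : (0 : FeatureSpace N m) ∈ M := by
    rw [hM]
    exact ⟨0, fun p => by simp⟩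
  have hdist0 : dist F (0 : FeatureSpace N m) = ‖y‖ := by
    rw [hdist 0 0 (fun p => by simp), hnormy]
    simp
  -- infDist computation
  have hinf : Metric.infDist F M = ‖y‖ := by
    refine le_antisymm ?_ ?_
    · calc Metric.infDist F M ≤ dist F 0 := Metric.infDist_le_dist_of_mem h0mem
        _ = ‖y‖ := hdist0
    · by_contra hlt
      push_neg at hlt
      obtain ⟨G, hG, hGd⟩ := (Metric.infDist_lt_iff ⟨0, h0mem⟩).mp hlt
      rw [hM] at hG
      obtain ⟨z, hz⟩ := hG
      rw [hdist G z hz, hnormy] at hGd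
      have : Real.sqrt (∑ j, y j ^ 2) ≤ Real.sqrt ((∑ j, y j ^ 2) + ∑ j, z j ^ 2) :=
        Real.sqrt_le_sqrt (le_add_of_nonneg_right
          (Finset.sum_nonneg fun j _ => sq_nonneg _))
      linarith
  refine ⟨hQF, by rw [hQF], hinf, norm_pos_iff.mpr hy⟩
end
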